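/- arXiv:0802.2909 — 3 statements merged into one kernel-verified Lean document; each statement's English description precedes it below -/
import Mathlib

section
/- Let U(L,L) be the group of complex 2L×2L matrices T with T*GT = G where G = diag(1_L, −1_L). Let E = −2cos(k) with sin(k) ≠ 0, and let C = (1/√2)[[1, −i1],[1, i1]], N = (1/√sin k)[[sin(k)1, 0],[−cos(k)1, 1]]. Then for any Hermitian L×L matrix W and λ ∈ ℝ, the conjugated transfer matrix C N T̂ N^{−1} C* equals R_k exp(λP), where T̂ = [[λW − E·1, −1],[1, 0]], R_k = diag(e^{−ik}1, e^{ik}1), and P = (i/(2 sin k))[[W, W],[−W, −W]]. In particular C N T̂ N^{−1} C* ∈ U(L,L). -/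
open Matrix Complex

set_option maxHeartbeats 1000000 in
/-- Normal form of the transfer matrix of a random Jacobi
operator at energy `E = −2cos(k) ∈ (−2,2)`:  with the Cayley transform `C` and
the basis change `N`, one has `C N T̂ N⁻¹ C* = R_k · exp(λP)`, and this matrix
lies in the generalized Lorentz group `U(L,L)`, i.e. `T* G T = G` for
`G = diag(1, −1)`. -/
theorem transfer_matrix_normal_form
    (L : ℕ) (k lam : ℝ) (hk : Real.sin k ≠ 0)
    (W : Matrix (Fin L) (Fin L) ℂ) (hW : W.IsHermitian) :
    let E : ℝ := -2 * Real.cos k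
    let G : Matrix (Fin L ⊕ Fin L) (Fin L ⊕ Fin L) ℂ :=
      fromBlocks 1 0 0 (-1)
    let Cay : Matrix (Fin L ⊕ Fin L) (Fin L ⊕ Fin L) ℂ :=
      ((Real.sqrt 2 : ℂ))⁻¹ • fromBlocks 1 (-(I • 1)) 1 (I • 1)
    let Nmat : Matrix (Fin L ⊕ Fin L) (Fin L ⊕ Fin L) ℂ :=
      ((Real.sin k : ℂ) ^ (-(1 / 2 : ℂ))) •
        fromBlocks ((Real.sin k : ℂ) • 1) 0 (-((Real.cos k : ℂ) • 1)) 1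
    let That : Matrix (Fin L ⊕ Fin L) (Fin L ⊕ Fin L) ℂ :=
      fromBlocks ((lam : ℂ) • W - (E : ℂ) • 1) (-1) 1 0
    let Rk : Matrix (Fin L ⊕ Fin L) (Fin L ⊕ Fin L) ℂ :=
      fromBlocks (Complex.exp (-(I * k)) • 1) 0 0 (Complex.exp (I * k) • 1)
    let P : Matrix (Fin L ⊕ Fin L) (Fin L ⊕ Fin L) ℂ :=
      (I / (2 * (Real.sin k : ℂ))) • fromBlocks W W (-W) (-W)
    let T : Matrix (Fin L ⊕ Fin L) (Fin L ⊕ Fin L) ℂ :=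
      Cay * Nmat * That * Nmat⁻¹ * Cay.conjTranspose
    T = Rk * NormedSpace.exp ((lam : ℂ) • P) ∧
      T.conjTranspose * G * T = G := by
  intro E G Cay Nmat That Rk P T
  have hs : (Real.sin k : ℂ) ≠ 0 := by exact_mod_cast ofReal_ne_zero.mpr hk
  have hs' : Complex.sin (k : ℂ) ≠ 0 := by rw [← Complex.ofReal_sin]; exact hs
  set σ : ℂ := (Real.sin k : ℂ) ^ (-(1 / 2 : ℂ)) with hσdef
  have hσ : σ ≠ 0 := by
    rw [hσdef, Ne, Complex.cpow_eq_zero_iff]; simp [hs']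
  have hNinv : Nmat⁻¹ = σ⁻¹ • fromBlocks ((Real.sin k : ℂ)⁻¹ • 1) 0
      (((Real.cos k : ℂ) / (Real.sin k : ℂ)) • 1) 1 := by
    apply inv_eq_right_inv
    simp only [Nmat]
    rw [Matrix.smul_mul, Matrix.mul_smul, smul_smul, mul_inv_cancel₀ hσ, one_smul,
      fromBlocks_multiply]
    simp [Matrix.smul_mul, Matrix.mul_smul, smul_smul, mul_inv_cancel₀ hs',
      ← fromBlocks_one, mul_comm, div_eq_mul_inv]
  have hE1 : Complex.exp (-(I * k)) = (Real.cos k : ℂ) - I * (Real.sin k : ℂ) := by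
    rw [show -(I * (k:ℂ)) = (-k : ℝ) * I by push_cast; ring, Complex.exp_mul_I]
    simp [Complex.cos_neg, Complex.sin_neg, Complex.ofReal_cos, Complex.ofReal_sin]
    ring
  have hE2 : Complex.exp (I * k) = (Real.cos k : ℂ) + I * (Real.sin k : ℂ) := by
    rw [show (I * (k:ℂ)) = (k : ℝ) * I by push_cast; ring, Complex.exp_mul_I]
    simp [Complex.ofReal_cos, Complex.ofReal_sin]; ring
  have hsc : (Real.sin k : ℂ)^2 + (Real.cos k : ℂ)^2 = 1 := by
    exact_mod_cast congrArg (Complex.ofReal) (Real.sin_sq_add_cos_sq k)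
  have hcos2 : Complex.cos (k:ℂ) ^ 2 = 1 - Complex.sin (k:ℂ) ^ 2 := by
    linear_combination Complex.sin_sq_add_cos_sq (k:ℂ)
  have hPP : ((lam : ℂ) • P) * ((lam : ℂ) • P) = 0 := by
    have hPP0 : (fromBlocks W W (-W) (-W) : Matrix (Fin L ⊕ Fin L) (Fin L ⊕ Fin L) ℂ) *
        fromBlocks W W (-W) (-W) = 0 := by
      simp [fromBlocks_multiply, Matrix.mul_neg, Matrix.neg_mul, ← fromBlocks_zero]
    simp only [P, smul_smul, Matrix.smul_mul, Matrix.mul_smul, hPP0, smul_zero]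
  have hexp : NormedSpace.exp ((lam : ℂ) • P) = 1 + (lam : ℂ) • P := by
    rw [NormedSpace.exp_eq_tsum (𝕂 := ℂ)]
    show ∑' m : ℕ, ((m.factorial : ℂ))⁻¹ • ((lam : ℂ) • P) ^ m = _
    rw [tsum_eq_sum (s := Finset.range 2)]
    · simp [Finset.sum_range_succ]
    · intro m hm
      have h2 : 2 ≤ m := by by_contra hc; exact hm (Finset.mem_range.mpr (by omega))
      have : ((lam : ℂ) • P) ^ m = 0 := by
        rw [show ((lam:ℂ) • P) ^ m = ((lam:ℂ) • P) ^ 2 * ((lam:ℂ) • P) ^ (m - 2) by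
          rw [← pow_add]; congr 1; omega, pow_two, hPP, zero_mul]
      simp [this, ← Complex.coe_smul]
  have key : T = Rk * (1 + (lam : ℂ) • P) := by
    simp only [T, Cay, Nmat, That, Rk, P, E, hNinv]
    rw [hE1, hE2]
    simp only [Matrix.smul_mul, Matrix.mul_smul, smul_smul, fromBlocks_multiply,
      conjTranspose_smul, fromBlocks_conjTranspose, conjTranspose_one, conjTranspose_zero,
      conjTranspose_neg, conjTranspose_smul, Matrix.mul_one, Matrix.one_mul, Matrix.mul_zero,
      Matrix.zero_mul, Matrix.mul_neg, Matrix.neg_mul, Matrix.add_mul, Matrix.mul_add,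
      Matrix.sub_mul, Matrix.mul_sub, smul_add, smul_sub, smul_neg,
      fromBlocks_add, Matrix.mul_one]
    rw [← hσdef]
    have hsqrt : ((Real.sqrt 2 : ℝ) : ℂ)⁻¹ * ((Real.sqrt 2 : ℝ) : ℂ)⁻¹ = 2⁻¹ := by
      rw [← mul_inv]
      have h22 : ((Real.sqrt 2 : ℝ) : ℂ) * ((Real.sqrt 2 : ℝ) : ℂ) = 2 := by
        norm_cast
        exact Real.mul_self_sqrt (by norm_num)
      rw [h22]
    simp only [Complex.star_def, map_inv₀, Complex.conj_ofReal, Complex.conj_I,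
      inv_mul_cancel_left₀ hσ, hsqrt, smul_zero, add_zero, zero_add, neg_neg,
      Matrix.fromBlocks_smul, Complex.ofReal_mul, Complex.ofReal_neg, Complex.ofReal_ofNat,
      Matrix.fromBlocks_add]
    rw [Matrix.fromBlocks_inj]
    refine ⟨?_, ?_, ?_, ?_⟩ <;>
      [skip; skip; skip; skip] <;>
      · match_scalars <;>
          (field_simp [hs']; (try ring_nf); (try simp only [Complex.I_sq, hcos2]); (try ring_nf); (try field_simp [hs']); (try ring_nf))
  refine ⟨by rw [hexp, key], ?_⟩
  have hWe : Wᴴ = W := hW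
  rw [key]
  simp only [G, Rk, P]
  rw [hE1, hE2]
  simp only [Matrix.mul_add, Matrix.add_mul, Matrix.mul_one, Matrix.one_mul,
    conjTranspose_add, conjTranspose_smul, conjTranspose_one, conjTranspose_neg,
    Matrix.fromBlocks_conjTranspose, Matrix.fromBlocks_smul, Matrix.smul_mul, Matrix.mul_smul,
    smul_smul, fromBlocks_multiply, Matrix.fromBlocks_add, Matrix.mul_zero, Matrix.zero_mul,
    Matrix.mul_neg, Matrix.neg_mul, hWe, smul_add, smul_sub, smul_neg, smul_zero,
    conjTranspose_zero, neg_zero,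
    add_zero, zero_add, neg_neg, Complex.star_def, _root_.map_mul, map_add, map_sub, map_div₀,
    map_inv₀, Complex.conj_ofReal, Complex.conj_I, map_ofNat, _root_.map_one]
  rw [Matrix.fromBlocks_inj]
  refine ⟨?_, ?_, ?_, ?_⟩ <;>
    · match_scalars <;>
        (field_simp [hs']; (try ring_nf); (try simp only [Complex.I_sq, hcos2]); (try ring_nf); (try field_simp [hs']); (try ring_nf))
end

section
/- Let W be Hermitian, k ∈ ℝ with sin(k) ≠ 0, P = (i/(2sin k))[[W, W],[−W, −W]] and R_k = diag(e^{−ik}1, e^{ik}1). Then −2cos(2k)P + R_k P R_k^{−1} + R_k^{−1} P R_k = ((1 − cos(2k))/sin(k)) · diag(iW, −iW). Consequently, the Lie algebra generated by {R P R^{−1} : R ∈ ⟨R_k⟩, W Hermitian} contains all matrices diag(iW, −iW) with W Hermitian. -/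
open Matrix Complex

attribute [local instance] LieRing.ofAssociativeRing

/-- The first-order perturbation `P = (i/(2 sin k))[[W,W],[−W,−W]]`. -/
noncomputable def pertMat (L : ℕ) (k : ℝ) (W : Matrix (Fin L) (Fin L) ℂ) :
    Matrix (Fin L ⊕ Fin L) (Fin L ⊕ Fin L) ℂ :=
  (I / (2 * (Real.sin k : ℂ))) • fromBlocks W W (-W) (-W)

/-- The free rotation `R_k = diag(e^{−ik}1, e^{ik}1)`. -/
noncomputable def rotMat (L : ℕ) (k : ℝ) :
    Matrix (Fin L ⊕ Fin L) (Fin L ⊕ Fin L) ℂ :=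
  fromBlocks (Complex.exp (-(I * k)) • 1) 0 0 (Complex.exp (I * k) • 1)

lemma rotMat_mul_right_inv (L : ℕ) (k : ℝ) :
    rotMat L k *
      fromBlocks (Complex.exp (I * k) • 1) 0 0 (Complex.exp (-(I * k)) • 1) = 1 := by
  simp [rotMat, fromBlocks_multiply, smul_smul, ← Complex.exp_add]

lemma rotInv (L : ℕ) (k : ℝ) : (rotMat L k)⁻¹ =
    fromBlocks (Complex.exp (I * k) • 1) 0 0 (Complex.exp (-(I * k)) • 1) :=
  inv_eq_right_inv (rotMat_mul_right_inv L k)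

lemma rotInvInv (L : ℕ) (k : ℝ) : ((rotMat L k)⁻¹)⁻¹ = rotMat L k := by
  haveI := invertibleOfRightInverse _ _ (rotMat_mul_right_inv L k)
  exact Matrix.inv_inv_of_invertible _

lemma conjGen {L : ℕ} (a b : ℂ) (hab : b * a = 1) (W : Matrix (Fin L) (Fin L) ℂ) :
    fromBlocks (a • 1) 0 0 (b • 1) * fromBlocks W W (-W) (-W) * fromBlocks (b • 1) 0 0 (a • 1)
      = fromBlocks W ((a * a) • W) (-((b * b) • W)) (-W) := by
  simp [fromBlocks_multiply, Matrix.smul_mul, Matrix.mul_smul, smul_smul, hab, mul_comm a b, hab]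

lemma mainId (L : ℕ) (k : ℝ) (hk : Real.sin k ≠ 0) (W : Matrix (Fin L) (Fin L) ℂ) :
      (-2 * (Real.cos (2 * k) : ℂ)) • pertMat L k W +
          rotMat L k * pertMat L k W * (rotMat L k)⁻¹ +
          (rotMat L k)⁻¹ * pertMat L k W * rotMat L k =
        (((1 - Real.cos (2 * k)) / Real.sin k : ℝ) : ℂ) •
          fromBlocks (I • W) 0 0 (-(I • W)) := by
  have hs : (Real.sin k : ℂ) ≠ 0 := by exact_mod_cast hk
  set e := Complex.exp (I * k) with he
  set f := Complex.exp (-(I * k)) with hf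
  have hfe : e * f = 1 := by rw [he, hf, ← Complex.exp_add]; simp
  have hef : f * e = 1 := by rw [mul_comm]; exact hfe
  have hcos : e * e + f * f = 2 * (Real.cos (2 * k) : ℂ) := by
    rw [he, hf, ← Complex.exp_add, ← Complex.exp_add]
    push_cast
    rw [Complex.cos]
    ring_nf
  have h1 : rotMat L k * pertMat L k W * (rotMat L k)⁻¹
      = (I / (2 * (Real.sin k : ℂ))) • fromBlocks W ((f * f) • W) (-((e * e) • W)) (-W) := by
    rw [rotInv, pertMat, rotMat, Matrix.mul_smul, Matrix.smul_mul, ← he, ← hf,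
      conjGen f e hfe]
  have h2 : (rotMat L k)⁻¹ * pertMat L k W * rotMat L k
      = (I / (2 * (Real.sin k : ℂ))) • fromBlocks W ((e * e) • W) (-((f * f) • W)) (-W) := by
    rw [rotInv, pertMat, rotMat, Matrix.mul_smul, Matrix.smul_mul, ← he, ← hf,
      conjGen e f hef]
  rw [h1, h2, pertMat]
  set c := I / (2 * (Real.sin k : ℂ)) with hc
  set s : ℂ := (((1 - Real.cos (2 * k)) / Real.sin k : ℝ) : ℂ) with hsc
  simp only [smul_smul, fromBlocks_smul, smul_neg, ← neg_smul, smul_zero]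
  rw [fromBlocks_add, fromBlocks_add]
  have key : ∀ (x y z w : ℂ), x + y + z = w → x • W + y • W + z • W = w • W := by
    intro x y z w h
    rw [← add_smul, ← add_smul, h]
  rw [fromBlocks_inj]
  refine ⟨?_, ?_, ?_, ?_⟩
  · apply key
    rw [hc, hsc]
    push_cast
    field_simp
    ring
  · rw [key (-2 * (Real.cos (2 * k) : ℂ) * c) (c * (f * f)) (c * (e * e)) 0
      (by linear_combination c * hcos), zero_smul]
  · rw [key (-2 * (Real.cos (2 * k) : ℂ) * -c) (c * -(e * e)) (c * -(f * f)) 0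
      (by linear_combination (-c) * hcos), zero_smul]
  · apply key
    rw [hc, hsc]
    push_cast
    field_simp
    ring

lemma real_smul_mat {n : Type*} (r : ℝ) (M : Matrix n n ℂ) : (↑r : ℂ) • M = r • M := by
  rw [← Complex.coe_algebraMap, algebraMap_smul]

/-- The averaging identity
`−2cos(2k)P + R_k P R_k⁻¹ + R_k⁻¹ P R_k = ((1−cos 2k)/sin k)·diag(iW,−iW)`,
and consequently the Lie algebra generated by the conjugates `R P R⁻¹`,
`R ∈ ⟨R_k⟩` (the closed group generated by `R_k`), `W` Hermitian, contains all
matrices `diag(iW, −iW)` with `W` Hermitian. -/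
theorem averaged_perturbations_generate_diagonal
    (L : ℕ) (k : ℝ) (hk : Real.sin k ≠ 0) :
    (∀ W : Matrix (Fin L) (Fin L) ℂ, W.IsHermitian →
      (-2 * (Real.cos (2 * k) : ℂ)) • pertMat L k W +
          rotMat L k * pertMat L k W * (rotMat L k)⁻¹ +
          (rotMat L k)⁻¹ * pertMat L k W * rotMat L k =
        (((1 - Real.cos (2 * k)) / Real.sin k : ℝ) : ℂ) •
          fromBlocks (I • W) 0 0 (-(I • W))) ∧
    (∀ W : Matrix (Fin L) (Fin L) ℂ, W.IsHermitian →
      fromBlocks (I • W) 0 0 (-(I • W)) ∈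
        LieSubalgebra.lieSpan ℝ (Matrix (Fin L ⊕ Fin L) (Fin L ⊕ Fin L) ℂ)
          {A | ∃ R ∈ closure {B : Matrix (Fin L ⊕ Fin L) (Fin L ⊕ Fin L) ℂ |
                  ∃ n : ℤ, B = rotMat L k ^ n},
              ∃ V : Matrix (Fin L) (Fin L) ℂ, V.IsHermitian ∧
                A = R * pertMat L k V * R⁻¹}) := by
  constructor
  · exact fun W _ => mainId L k hk W
  · intro W hW
    set S := {A | ∃ R ∈ closure {B : Matrix (Fin L ⊕ Fin L) (Fin L ⊕ Fin L) ℂ |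
                  ∃ n : ℤ, B = rotMat L k ^ n},
              ∃ V : Matrix (Fin L) (Fin L) ℂ, V.IsHermitian ∧
                A = R * pertMat L k V * R⁻¹} with hS
    set 𝔤 := LieSubalgebra.lieSpan ℝ (Matrix (Fin L ⊕ Fin L) (Fin L ⊕ Fin L) ℂ) S with hg
    -- membership of the three conjugates
    have hmem : ∀ n : ℤ, rotMat L k ^ n ∈
        closure {B : Matrix (Fin L ⊕ Fin L) (Fin L ⊕ Fin L) ℂ | ∃ n : ℤ, B = rotMat L k ^ n} :=
      fun n => subset_closure ⟨n, rfl⟩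
    have hP : pertMat L k W ∈ 𝔤 := by
      apply LieSubalgebra.subset_lieSpan
      refine ⟨1, by simpa using hmem 0, W, hW, by simp⟩
    have hA1 : rotMat L k * pertMat L k W * (rotMat L k)⁻¹ ∈ 𝔤 := by
      apply LieSubalgebra.subset_lieSpan
      exact ⟨rotMat L k, by simpa using hmem 1, W, hW, rfl⟩
    have hA2 : (rotMat L k)⁻¹ * pertMat L k W * rotMat L k ∈ 𝔤 := by
      apply LieSubalgebra.subset_lieSpan
      refine ⟨(rotMat L k)⁻¹, by simpa [Matrix.zpow_neg_one] using hmem (-1), W, hW, ?_⟩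
      rw [rotInvInv]
    -- the scalar is nonzero
    set r : ℝ := (1 - Real.cos (2 * k)) / Real.sin k with hr
    have hrne : r ≠ 0 := by
      have h2 : 1 - Real.cos (2 * k) = 2 * Real.sin k ^ 2 := by
        rw [Real.cos_two_mul']; nlinarith [Real.sin_sq_add_cos_sq k]
      rw [hr, h2]
      positivity
    have hsum : (-2 * (Real.cos (2 * k)) : ℝ) • pertMat L k W +
          rotMat L k * pertMat L k W * (rotMat L k)⁻¹ +
          (rotMat L k)⁻¹ * pertMat L k W * rotMat L k =
        r • fromBlocks (I • W) 0 0 (-(I • W)) := by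
      rw [← real_smul_mat r, ← real_smul_mat (-2 * Real.cos (2 * k))]
      exact_mod_cast mainId L k hk W
    have : fromBlocks (I • W) 0 0 (-(I • W)) =
        r⁻¹ • ((-2 * (Real.cos (2 * k)) : ℝ) • pertMat L k W +
          rotMat L k * pertMat L k W * (rotMat L k)⁻¹ +
          (rotMat L k)⁻¹ * pertMat L k W * rotMat L k) := by
      rw [hsum, smul_smul, inv_mul_cancel₀ hrne, one_smul]
    rw [this]
    exact 𝔤.smul_mem _ (𝔤.add_mem (𝔤.add_mem (𝔤.smul_mem _ hP) hA1) hA2)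
end

section
/- The Lie algebra 𝔲 = {diag(u,v) : u,v ∈ u(L), Tr(u + v) = 0} is contained in the Lie algebra generated by the set {diag(iW, −iW) : W Hermitian L×L}. In particular, since [iV, iW] for Hermitian V, W exhaust su(L) (by simplicity of su(L) for L ≥ 2), all pairs diag(a,a) with a ∈ su(L) and all diag(iW, −iW) lie in the generated algebra, whose span is 𝔲. -/
open Matrix Complex

attribute [local instance 100] LieRing.ofAssociativeRing

private lemma stdBasis_conjT {L : ℕ} (j k : Fin L) (c : ℂ) :
    (Matrix.single j k c)ᴴ = Matrix.single k j (starRingEnd ℂ c) := by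
  ext p q
  simp only [conjTranspose_apply, Matrix.single, of_apply]
  aesop

private lemma bracket_c {L : ℕ} (j k : Fin L) (h : j ≠ k) :
    ⁅Matrix.single j j (1:ℂ), Matrix.single j k (1:ℂ) + Matrix.single k j 1⁆
      = Matrix.single j k 1 - Matrix.single k j 1 := by
  simp [Ring.lie_def, mul_add, add_mul, h, h.symm]

private lemma bracket_d {L : ℕ} (j k : Fin L) (h : j ≠ k) :
    ⁅Matrix.single j j (1:ℂ), I • Matrix.single j k (1:ℂ) - I • Matrix.single k j 1⁆
      = I • Matrix.single j k 1 + I • Matrix.single k j 1 := by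
  simp [Ring.lie_def, mul_sub, sub_mul, Matrix.mul_smul, Matrix.smul_mul, h, h.symm]

private lemma bracket_f {L : ℕ} (j z : Fin L) (h : j ≠ z) :
    ⁅Matrix.single j z (1:ℂ) + Matrix.single z j 1,
      I • Matrix.single z j (1:ℂ) - I • Matrix.single j z 1⁆
      = (2:ℝ) • (I • Matrix.single j j (1:ℂ) - I • Matrix.single z z 1) := by
  simp [Ring.lie_def, mul_sub, sub_mul, mul_add, add_mul, Matrix.mul_smul, Matrix.smul_mul,
    h, h.symm, smul_sub, two_smul]
  abel

private lemma bracket_gen {L : ℕ} (V W : Matrix (Fin L) (Fin L) ℂ) :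
    ⁅fromBlocks (I • V) 0 0 (-(I • V)), fromBlocks (I • W) 0 0 (-(I • W))⁆
      = fromBlocks (-⁅V,W⁆) 0 0 (-⁅V,W⁆) := by
  simp only [Ring.lie_def, fromBlocks_multiply, Matrix.mul_smul, Matrix.smul_mul, smul_smul,
    I_mul_I, Matrix.mul_zero, Matrix.zero_mul, add_zero, zero_add, neg_neg, neg_smul, one_smul,
    neg_one_smul, mul_neg, neg_mul, smul_zero, neg_zero]
  ext (i | i) (j | j) <;>
    simp [fromBlocks, Matrix.sub_apply, Matrix.neg_apply] <;> ring

private theorem sum_repr {L : ℕ} (hL : 0 < L) (a : Matrix (Fin L) (Fin L) ℂ)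
    (hre : ∀ p q : Fin L, (a q p).re = -(a p q).re)
    (him : ∀ p q : Fin L, (a q p).im = (a p q).im)
    (htr' : ∑ j, (a j j).im = 0) :
    a = (∑ j, ∑ k, ((a j k).re/2) • (Matrix.single j k (1:ℂ) - Matrix.single k j 1))
      + (∑ j, ∑ k, (if j = k then (0:ℝ) else (a j k).im/2) •
          (I • (Matrix.single j k (1:ℂ)) + I • Matrix.single k j 1))
      + (∑ j, (a j j).im •
          (I • Matrix.single j j (1:ℂ) - I • Matrix.single (⟨0,hL⟩ : Fin L) ⟨0,hL⟩ 1)) := by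
  have hdiag : ∀ p : Fin L, (a p p).re = 0 := by
    intro p; have := hre p p; linarith
  ext p q
  simp only [Matrix.add_apply, Matrix.sum_apply, Matrix.smul_apply, Matrix.sub_apply,
    Matrix.add_apply, Matrix.single, of_apply, Matrix.smul_apply, smul_ite,
    smul_sub, smul_add, smul_zero, Matrix.zero_apply, smul_eq_mul, mul_one, ite_and,
    Finset.sum_sub_distrib, Finset.sum_add_distrib, Finset.sum_ite_eq, Finset.sum_ite_eq',
    Finset.sum_ite_irrel, Finset.sum_const_zero, Complex.real_smul, ite_mul, mul_ite,
    zero_mul, mul_zero, Finset.mem_univ, if_true]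
  have hsum : ∑ x : Fin L, (((a x x).im : ℂ)) * Complex.I = 0 := by
    rw [← Finset.sum_mul, ← Complex.ofReal_sum, htr']
    simp
  by_cases hpq : p = q
  · subst hpq
    by_cases hz : (⟨0,hL⟩ : Fin L) = p <;>
      simp only [hz, if_true, if_false, if_pos rfl, hsum, sub_zero] <;>
      · apply Complex.ext <;> simp [hdiag p] <;> ring_nf
  · have h1 := hre p q
    have h2 := him p q
    by_cases hz : (⟨0,hL⟩ : Fin L) = p
    · have hz2 : ¬((⟨0,hL⟩:Fin L) = q) := by rw [hz]; exact hpq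
      simp only [hpq, Ne.symm hpq, if_false, hz, hz2, if_true, h1, h2]
      apply Complex.ext <;> simp [h1, h2] <;> ring
    · simp only [hpq, Ne.symm hpq, if_false, hz, h1, h2]
      apply Complex.ext <;> simp [h1, h2] <;> ring

/-- The Lie algebra
`𝔲 = {diag(u,v) : u,v ∈ u(L), Tr(u+v) = 0}` is contained in the Lie algebra
generated by the matrices `diag(iW, −iW)` with `W` Hermitian. -/
theorem u_subalgebra_generated_by_diag_hermitian (L : ℕ) :
    ∀ u v : Matrix (Fin L) (Fin L) ℂ,
      u.conjTranspose = -u → v.conjTranspose = -v →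
      u.trace + v.trace = 0 →
      fromBlocks u 0 0 v ∈
        LieSubalgebra.lieSpan ℝ (Matrix (Fin L ⊕ Fin L) (Fin L ⊕ Fin L) ℂ)
          {A | ∃ W : Matrix (Fin L) (Fin L) ℂ, W.IsHermitian ∧
              A = fromBlocks (I • W) 0 0 (-(I • W))} := by
  intro u v hu hv htr
  set S := LieSubalgebra.lieSpan ℝ (Matrix (Fin L ⊕ Fin L) (Fin L ⊕ Fin L) ℂ)
      {A | ∃ W : Matrix (Fin L) (Fin L) ℂ, W.IsHermitian ∧
          A = fromBlocks (I • W) 0 0 (-(I • W))} with hSdef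
  have hgen : ∀ W : Matrix (Fin L) (Fin L) ℂ, W.IsHermitian →
      fromBlocks (I • W) 0 0 (-(I • W)) ∈ S :=
    fun W hW => LieSubalgebra.subset_lieSpan ⟨W, hW, rfl⟩
  rcases Nat.eq_zero_or_pos L with h0 | hL
  · subst h0
    have hz : fromBlocks u 0 0 v = 0 := by
      ext i j
      cases i with
      | inl x => exact x.elim0
      | inr x => exact x.elim0
    rw [hz]
    exact S.zero_mem
  -- the ℝ-linear map a ↦ diag(a,a)
  let f : Matrix (Fin L) (Fin L) ℂ →ₗ[ℝ] Matrix (Fin L ⊕ Fin L) (Fin L ⊕ Fin L) ℂ :=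
    { toFun := fun a => fromBlocks a 0 0 a
      map_add' := fun a b => by
        ext (i | i) (j | j) <;> simp [fromBlocks]
      map_smul' := fun r a => by
        ext (i | i) (j | j) <;> simp [fromBlocks] }
  let M : Submodule ℝ (Matrix (Fin L) (Fin L) ℂ) := (S : Submodule ℝ _).comap f
  have hMmem : ∀ x : Matrix (Fin L) (Fin L) ℂ, x ∈ M ↔ fromBlocks x 0 0 x ∈ S := by
    intro x
    exact Iff.rfl
  -- commutators of Hermitian matrices are in M
  have hcomm : ∀ V W : Matrix (Fin L) (Fin L) ℂ, V.IsHermitian → W.IsHermitian →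
      ⁅V, W⁆ ∈ M := by
    intro V W hV hW
    have h : ⁅fromBlocks (I • V) 0 0 (-(I • V)), fromBlocks (I • W) 0 0 (-(I • W))⁆ ∈ S :=
      S.lie_mem (hgen V hV) (hgen W hW)
    rw [bracket_gen] at h
    have hneg : -⁅V, W⁆ ∈ M := (hMmem _).2 h
    simpa using M.neg_mem hneg
  -- Hermitian building blocks
  have hermD : ∀ j : Fin L, (Matrix.single j j (1:ℂ)).IsHermitian := by
    intro j
    rw [Matrix.IsHermitian, stdBasis_conjT]
    simp
  have hermS : ∀ j k : Fin L,
      (Matrix.single j k (1:ℂ) + Matrix.single k j 1).IsHermitian := by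
    intro j k
    rw [Matrix.IsHermitian, conjTranspose_add, stdBasis_conjT, stdBasis_conjT]
    simp [add_comm]
  have hermA : ∀ j k : Fin L,
      (I • Matrix.single j k (1:ℂ) - I • Matrix.single k j 1).IsHermitian := by
    intro j k
    rw [Matrix.IsHermitian, conjTranspose_sub, conjTranspose_smul, conjTranspose_smul,
      stdBasis_conjT, stdBasis_conjT]
    simp [sub_eq_add_neg, add_comm]
  -- membership of the basic elements
  have hc : ∀ j k : Fin L, Matrix.single j k (1:ℂ) - Matrix.single k j 1 ∈ M := by
    intro j k
    by_cases hjk : j = k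
    · subst hjk; simp only [sub_self]; exact M.zero_mem
    · have h := hcomm _ _ (hermD j) (hermS j k)
      rwa [bracket_c j k hjk] at h
  have hd : ∀ j k : Fin L, j ≠ k →
      I • Matrix.single j k (1:ℂ) + I • Matrix.single k j 1 ∈ M := by
    intro j k hjk
    have h := hcomm _ _ (hermD j) (hermA j k)
    rwa [bracket_d j k hjk] at h
  have hf : ∀ j z : Fin L,
      I • Matrix.single j j (1:ℂ) - I • Matrix.single z z 1 ∈ M := by
    intro j z
    by_cases hjz : j = z
    · subst hjz; simp only [sub_self]; exact M.zero_mem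
    · have h := hcomm _ _ (hermS j z) (hermA z j)
      rw [bracket_f j z hjz] at h
      have h2 := M.smul_mem (2⁻¹ : ℝ) h
      rwa [smul_smul, inv_mul_cancel₀ (by norm_num : (2:ℝ) ≠ 0), one_smul] at h2
  -- every traceless anti-Hermitian matrix is in M
  have hmain : ∀ a : Matrix (Fin L) (Fin L) ℂ, aᴴ = -a → a.trace = 0 → a ∈ M := by
    intro a ha hatr
    have key : ∀ p q : Fin L, starRingEnd ℂ (a q p) = -(a p q) := by
      intro p q
      simpa [conjTranspose_apply] using congrFun (congrFun ha p) q
    have hre : ∀ p q, (a q p).re = -(a p q).re := by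
      intro p q; simpa using congrArg Complex.re (key p q)
    have him : ∀ p q, (a q p).im = (a p q).im := by
      intro p q
      have := congrArg Complex.im (key p q); simp at this; linarith
    have htr' : ∑ j, (a j j).im = 0 := by
      have := congrArg Complex.im hatr
      simpa [Matrix.trace, Matrix.diag, Complex.im_sum] using this
    rw [sum_repr hL a hre him htr']
    refine M.add_mem (M.add_mem ?_ ?_) ?_
    · exact Submodule.sum_mem _ fun j _ => Submodule.sum_mem _ fun k _ =>
        M.smul_mem _ (hc j k)
    · refine Submodule.sum_mem _ fun j _ => Submodule.sum_mem _ fun k _ => ?_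
      by_cases hjk : j = k
      · rw [if_pos hjk, zero_smul]; exact M.zero_mem
      · exact M.smul_mem _ (hd j k hjk)
    · exact Submodule.sum_mem _ fun j _ => M.smul_mem _ (hf j ⟨0, hL⟩)
  -- assemble
  set W : Matrix (Fin L) (Fin L) ℂ := (-(I/2)) • (u - v) with hWdef
  have hW : W.IsHermitian := by
    rw [Matrix.IsHermitian, hWdef, conjTranspose_smul, conjTranspose_sub, hu, hv]
    rw [show star (-(I/2) : ℂ) = I/2 from by simp [Complex.ext_iff]; norm_num]
    ext p q
    simp [Matrix.smul_apply, Matrix.sub_apply, Matrix.neg_apply]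
    ring
  have hIW : I • W = ((1:ℂ)/2) • (u - v) := by
    rw [hWdef, smul_smul, show I * -(I/2) = (1:ℂ)/2 from by simp [Complex.ext_iff]]
  set a : Matrix (Fin L) (Fin L) ℂ := ((1:ℂ)/2) • (u + v) with hadef
  have haH : aᴴ = -a := by
    rw [hadef, conjTranspose_smul, conjTranspose_add, hu, hv]
    rw [show star ((1:ℂ)/2) = (1:ℂ)/2 from by simp [Complex.ext_iff]]
    ext p q
    simp [Matrix.smul_apply, Matrix.add_apply, Matrix.neg_apply]
    ring
  have hatr : a.trace = 0 := by
    rw [hadef, Matrix.trace_smul, Matrix.trace_add, htr, smul_zero]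
  have hsplit : fromBlocks u 0 0 v
      = fromBlocks (I • W) 0 0 (-(I • W)) + fromBlocks a 0 0 a := by
    rw [hIW, hadef]
    ext (i | i) (j | j) <;>
      simp [fromBlocks, Matrix.smul_apply, Matrix.add_apply, Matrix.sub_apply,
        Matrix.neg_apply] <;> ring
  rw [hsplit]
  exact S.add_mem (hgen W hW) ((hMmem a).1 (hmain a haH hatr))
end
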